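/- Let 0 < ν_d ≤ ν_d′ and 0 < ν_s ≤ ν_s′. Assume ĉₑ(ν_d,ν_s′) + b̂ₑ(ν_d) > 0 and b̂ₑ(ν_d)/(ĉₑ(ν_d,ν_s′) + b̂ₑ(ν_d)) < 1/2. Then (ĉₑ(ν_d,ν_s′) + b̂ₑ(ν_d))·(1 − h(b̂ₑ(ν_d)/(ĉₑ(ν_d,ν_s′) + b̂ₑ(ν_d)))) ≤ (ĉₑ(ν_d′,ν_s) + b̂ₑ(ν_d′))·(1 − h(b̂ₑ(ν_d′)/(ĉₑ(ν_d′,ν_s) + b̂ₑ(ν_d′)))); i.e., the quantity (ĉₑ + b̂ₑ)(1 − h(b̂ₑ/(ĉₑ + b̂ₑ))) is monotonically increasing in the true decoy intensity ν_d and monotonically decreasing in the true signal intensity ν_s. -/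

import Mathlib

/-!
Write `F(b, c) = (b + c) * (1 - h (b / (b + c)))`. Since `h` is increasing on `[0, 1/2]` and
`h ≤ 1`, `F` increases whenever the total `b + c` increases while the error fraction
`b / (b + c) ≤ 1/2` decreases. Both `b̂ₑ` and `ĉₑ` are affine in `u = 1 - exp (-α ν_d)`, and the
ratio `ĉₑ / b̂ₑ` is increasing in `u` because `s < 1/2`; raising `ν_d` therefore raises the total
and lowers the error fraction, and so does lowering `ν_s`, which only raises `ĉₑ`.
-/

/-- Binary entropy function (base-2). Note `Real.logb 2 0 = 0`, so `binEnt 0 = binEnt 1 = 0`. -/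
noncomputable def binEnt (x : ℝ) : ℝ :=
  -x * Real.logb 2 x - (1 - x) * Real.logb 2 (1 - x)

/-- Estimate `b̂ₑ` with true decoy intensity `νd` and assumed decoy intensity `μd`. -/
noncomputable def bE (α s p₀ μd νd : ℝ) : ℝ :=
  ((s * (1 - Real.exp (-α * νd)) + p₀ / 2) * Real.exp μd - p₀ / 2) / μd

/-- Estimate `ĉₑ` with true intensities `νd, νs` and assumed intensities `μd, μs`. -/
noncomputable def cE (α s p₀ μd μs νd νs : ℝ) : ℝ :=
  (μs ^ 2 * Real.exp μd * ((1 - s) * (1 - Real.exp (-α * νd)) + (p₀ / 2) * (1 - Real.exp (-μd)))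
    - μd ^ 2 * Real.exp μs * ((1 - s) * (1 - Real.exp (-α * νs)) + (p₀ / 2) * (1 - Real.exp (-μs))))
  / (μd * μs * (μs - μd))

open Real Set

lemma binEnt_eq_binEntropy_div_log_two (x : ℝ) : binEnt x = binEntropy x / log 2 := by
  simp only [binEnt, binEntropy, logb, log_inv]
  ring

lemma binEnt_le_one (x : ℝ) : binEnt x ≤ 1 := by
  rw [binEnt_eq_binEntropy_div_log_two, div_le_one (log_pos one_lt_two)]
  exact binEntropy_le_log_two

lemma binEnt_monotoneOn : MonotoneOn binEnt (Icc 0 (1 / 2)) := by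
  intro x hx y hy hxy
  rw [binEnt_eq_binEntropy_div_log_two, binEnt_eq_binEntropy_div_log_two]
  rw [one_div] at hx hy
  exact div_le_div_of_nonneg_right (binEntropy_strictMonoOn.monotoneOn hx hy hxy)
    (log_pos one_lt_two).le

lemma mul_one_sub_binEnt_div_le_of_le {b₁ c₁ b₂ c₂ : ℝ} (hb₂ : 0 ≤ b₂) (hpos : 0 < c₁ + b₁)
    (hhalf : b₁ / (c₁ + b₁) ≤ 1 / 2) (hsum : c₁ + b₁ ≤ c₂ + b₂) (hcross : c₁ * b₂ ≤ c₂ * b₁) :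
    (c₁ + b₁) * (1 - binEnt (b₁ / (c₁ + b₁)))
      ≤ (c₂ + b₂) * (1 - binEnt (b₂ / (c₂ + b₂))) := by
  have hpos₂ : 0 < c₂ + b₂ := hpos.trans_le hsum
  have hfrac : b₂ / (c₂ + b₂) ≤ b₁ / (c₁ + b₁) := by
    rw [div_le_div_iff₀ hpos₂ hpos]
    linarith
  have hent : binEnt (b₂ / (c₂ + b₂)) ≤ binEnt (b₁ / (c₁ + b₁)) :=
    binEnt_monotoneOn ⟨by positivity, hfrac.trans hhalf⟩
      ⟨(div_nonneg hb₂ hpos₂.le).trans hfrac, hhalf⟩ hfrac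
  exact mul_le_mul hsum (by linarith) (sub_nonneg.2 (binEnt_le_one _)) hpos₂.le

lemma one_sub_exp_neg_mul_monotone {α : ℝ} (hα : 0 ≤ α) :
    Monotone fun ν : ℝ => 1 - exp (-α * ν) := fun ν ν' h => by
  have : exp (-α * ν') ≤ exp (-α * ν) := exp_le_exp.2 (by nlinarith)
  linarith

section Estimates

variable {α s p₀ μd μs : ℝ}

lemma bE_nonneg (hα : 0 ≤ α) (hs : 0 ≤ s) (hp : 0 ≤ p₀) (hμd : 0 < μd) {ν : ℝ} (hν : 0 ≤ ν) :
    0 ≤ bE α s p₀ μd ν := by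
  have hu : 0 ≤ 1 - exp (-α * ν) := by
    simpa using one_sub_exp_neg_mul_monotone hα hν
  have hE : 1 ≤ exp μd := one_le_exp hμd.le
  unfold bE
  apply div_nonneg _ hμd.le
  nlinarith [mul_nonneg hs hu]

lemma bE_monotone (hα : 0 ≤ α) (hs : 0 ≤ s) (hμd : 0 < μd) : Monotone (bE α s p₀ μd) :=
  fun ν ν' h => by
    have hu := one_sub_exp_neg_mul_monotone hα h
    unfold bE
    gcongr

lemma cE_monotone_left (hα : 0 ≤ α) (hs : s ≤ 1) (hμd : 0 < μd) (hμ : μd < μs) (νs : ℝ) :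
    Monotone fun νd => cE α s p₀ μd μs νd νs := fun ν ν' h => by
  have hu := one_sub_exp_neg_mul_monotone hα h
  have hμs : 0 < μs := hμd.trans hμ
  have hsd : 0 < μs - μd := sub_pos.2 hμ
  unfold cE
  apply div_le_div_of_nonneg_right _ (by positivity)
  gcongr

lemma cE_antitone_right (hα : 0 ≤ α) (hs : s ≤ 1) (hμd : 0 < μd) (hμ : μd < μs) (νd : ℝ) :
    Antitone (cE α s p₀ μd μs νd) := fun ν ν' h => by
  have hu := one_sub_exp_neg_mul_monotone hα h
  have hμs : 0 < μs := hμd.trans hμ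
  unfold cE
  gcongr

lemma cE_mul_bE_sub_cE_mul_bE (hμd : 0 < μd) (hμ : μd < μs) (νd νd' νs : ℝ) :
    cE α s p₀ μd μs νd' νs * bE α s p₀ μd νd - cE α s p₀ μd μs νd νs * bE α s p₀ μd νd'
      = (exp (-α * νd) - exp (-α * νd')) * exp μd
        * (μs ^ 2 * (p₀ / 2) * (exp μd - 1) * (1 - 2 * s)
          + s * μd ^ 2 * exp μs * ((1 - s) * (1 - exp (-α * νs)) + p₀ / 2 * (1 - exp (-μs))))
        / (μd ^ 2 * μs * (μs - μd)) := by
  have hsd : μs - μd ≠ 0 := (sub_pos.2 hμ).ne'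
  have hμs : μs ≠ 0 := (hμd.trans hμ).ne'
  unfold cE bE
  rw [exp_neg μd]
  field_simp
  ring

lemma cE_mul_bE_le_cE_mul_bE (hα : 0 ≤ α) (hs₀ : 0 ≤ s) (hs : s ≤ 1 / 2) (hp : 0 ≤ p₀)
    (hμd : 0 < μd) (hμ : μd < μs) {νd νd' : ℝ} (hνd : νd ≤ νd') {νs : ℝ} (hνs : 0 ≤ νs) :
    cE α s p₀ μd μs νd νs * bE α s p₀ μd νd' ≤ cE α s p₀ μd μs νd' νs * bE α s p₀ μd νd := by
  have hμs : 0 < μs := hμd.trans hμ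
  have hνs' : 0 ≤ 1 - exp (-α * νs) := by
    simpa using one_sub_exp_neg_mul_monotone hα hνs
  have hμs' : 0 ≤ 1 - exp (-μs) := by
    simpa using one_sub_exp_neg_mul_monotone zero_le_one hμs.le
  have hW : 0 ≤ (1 - s) * (1 - exp (-α * νs)) + p₀ / 2 * (1 - exp (-μs)) :=
    add_nonneg (mul_nonneg (by linarith) hνs') (mul_nonneg (by positivity) hμs')
  have hexp : 0 ≤ exp (-α * νd) - exp (-α * νd') := sub_nonneg.2 (exp_le_exp.2 (by nlinarith))
  have hμd' : 0 ≤ exp μd - 1 := sub_nonneg.2 (one_le_exp hμd.le)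
  have hsd : 0 < μs - μd := sub_pos.2 hμ
  rw [← sub_nonneg, cE_mul_bE_sub_cE_mul_bE hμd hμ]
  refine div_nonneg (mul_nonneg (mul_nonneg hexp (exp_pos _).le) (add_nonneg ?_ ?_)) (by positivity)
  · exact mul_nonneg (mul_nonneg (by positivity) hμd') (by linarith)
  · exact mul_nonneg (by positivity) hW

end Estimates

theorem stmt16_general (α s p₀ μd μs νd νd' νs νs' : ℝ)
    (hα : 0 < α) (hs0 : 0 ≤ s) (hs : s < 1 / 2) (hp : 0 < p₀)
    (hμd : 0 < μd) (hμ : μd < μs)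
    (hνd : 0 < νd) (hνd' : νd ≤ νd') (hνs : 0 < νs) (hνs' : νs ≤ νs')
    (hpos : 0 < cE α s p₀ μd μs νd νs' + bE α s p₀ μd νd)
    (hratio : bE α s p₀ μd νd / (cE α s p₀ μd μs νd νs' + bE α s p₀ μd νd) < 1 / 2) :
    (cE α s p₀ μd μs νd νs' + bE α s p₀ μd νd) *
        (1 - binEnt (bE α s p₀ μd νd / (cE α s p₀ μd μs νd νs' + bE α s p₀ μd νd)))
      ≤ (cE α s p₀ μd μs νd' νs + bE α s p₀ μd νd') *
        (1 - binEnt (bE α s p₀ μd νd' / (cE α s p₀ μd μs νd' νs + bE α s p₀ μd νd'))) := by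
  have hb : bE α s p₀ μd νd ≤ bE α s p₀ μd νd' := bE_monotone hα.le hs0 hμd hνd'
  have hb' : 0 ≤ bE α s p₀ μd νd' := bE_nonneg hα.le hs0 hp.le hμd (hνd.le.trans hνd')
  have hcs : cE α s p₀ μd μs νd νs' ≤ cE α s p₀ μd μs νd νs :=
    cE_antitone_right hα.le (by linarith) hμd hμ νd hνs'
  have hcd : cE α s p₀ μd μs νd νs ≤ cE α s p₀ μd μs νd' νs :=
    cE_monotone_left hα.le (by linarith) hμd hμ νs hνd'
  refine mul_one_sub_binEnt_div_le_of_le hb' hpos hratio.le (by linarith) ?_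
  calc cE α s p₀ μd μs νd νs' * bE α s p₀ μd νd'
      ≤ cE α s p₀ μd μs νd νs * bE α s p₀ μd νd' := mul_le_mul_of_nonneg_right hcs hb'
    _ ≤ cE α s p₀ μd μs νd' νs * bE α s p₀ μd νd :=
      cE_mul_bE_le_cE_mul_bE hα.le hs0 hs.le hp.le hμd hμ hνd' hνs.le

theorem stmt16 (α s p₀ μd μs νd νd' νs νs' : ℝ)
    (hα : 0 < α) (hα1 : α ≤ 1) (hs0 : 0 ≤ s) (hs : s < 1 / 2) (hp : 0 < p₀)
    (hμd : 0 < μd) (hμ : μd < μs)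
    (hνd : 0 < νd) (hνd' : νd ≤ νd') (hνs : 0 < νs) (hνs' : νs ≤ νs')
    (hpos : 0 < cE α s p₀ μd μs νd νs' + bE α s p₀ μd νd)
    (hratio : bE α s p₀ μd νd / (cE α s p₀ μd μs νd νs' + bE α s p₀ μd νd) < 1 / 2) :
    (cE α s p₀ μd μs νd νs' + bE α s p₀ μd νd) *
        (1 - binEnt (bE α s p₀ μd νd / (cE α s p₀ μd μs νd νs' + bE α s p₀ μd νd)))
      ≤ (cE α s p₀ μd μs νd' νs + bE α s p₀ μd νd') *
        (1 - binEnt (bE α s p₀ μd νd' / (cE α s p₀ μd μs νd' νs + bE α s p₀ μd νd'))) :=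
  stmt16_general α s p₀ μd μs νd νd' νs νs' hα hs0 hs hp hμd hμ hνd hνd' hνs hνs' hpos hratio
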